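/- arXiv:1906.11352 — 4 statements merged into one kernel-verified Lean document; each statement's English description precedes it below -/
import Mathlib

section
/- Let $n \ge 3$ and let $\rho : (a,b) \to (0,\infty)$ be twice differentiable. Define $m(s) = \tfrac{1}{2}\rho(s)^{n-2}(1-\rho'(s)^2)$ and $R(s) = (n-1)\rho(s)^{-2}[(n-2)(1-\rho'(s)^2) - 2\rho(s)\rho''(s)]$. If $\rho'(s) \ge 0$ and $R(s) \ge 0$ for all $s \in (a,b)$, then $m$ is monotone nondecreasing on $(a,b)$. -/
open Set Filter

/-!
Writing `ρ^(n-2) = ρ^(n-3) ρ`, the derivative of the Hawking mass factors as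
`m' = ½ ρ^(n-3) ρ' [(n-2)(1 - ρ'²) - 2 ρ ρ'']`, and the bracket is `ρ² R / (n-1)`.
So `m' ≥ 0` wherever `ρ' ≥ 0` and `R ≥ 0`, and the mean value theorem gives monotonicity.
-/

theorem hasDerivAt_hawkingMass {ρ σ : ℝ → ℝ} {σ' s : ℝ} (k : ℕ)
    (hρ : HasDerivAt ρ (σ s) s) (hσ : HasDerivAt σ σ' s) :
    HasDerivAt (fun t => 1 / 2 * ρ t ^ (k + 1) * (1 - σ t ^ 2))
      (1 / 2 * (ρ s ^ k * σ s) * ((k + 1) * (1 - σ s ^ 2) - 2 * ρ s * σ')) s := by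
  have h := ((hρ.fun_pow (k + 1)).fun_mul
    ((hasDerivAt_const s 1).fun_sub (hσ.fun_pow 2))).const_mul (1 / 2)
  simp only [← mul_assoc, add_tsub_cancel_right] at h
  refine h.congr_deriv ?_
  push_cast
  ring

theorem monotoneOn_of_hasDerivAt_nonneg {D : Set ℝ} (hDo : IsOpen D) (hDc : Convex ℝ D)
    {f f' : ℝ → ℝ} (hf : ∀ s ∈ D, HasDerivAt f (f' s) s) (hf'₀ : ∀ s ∈ D, 0 ≤ f' s) :
    MonotoneOn f D := by
  refine monotoneOn_of_hasDerivWithinAt_nonneg (f' := f') hDc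
    (fun s hs => (hf s hs).continuousAt.continuousWithinAt) ?_ ?_ <;> rw [hDo.interior_eq]
  · exact fun s hs => (hf s hs).hasDerivWithinAt
  · exact hf'₀

/-- Monotonicity of the generalized Hawking mass
`m(s) = ½ ρ(s)^(n-2) (1 - ρ'(s)²)` when the area radius is nondecreasing
(`ρ' ≥ 0`) and the scalar curvature
`R(s) = (n-1) ρ(s)⁻² [(n-2)(1-ρ'(s)²) - 2 ρ(s) ρ''(s)]` is nonnegative on `(a,b)`. -/
theorem hawking_mass_monotone
    (n : ℕ) (hn : 3 ≤ n) (a b : ℝ) (ρ : ℝ → ℝ)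
    (hρpos : ∀ s ∈ Ioo a b, 0 < ρ s)
    (hρdiff : ∀ s ∈ Ioo a b, DifferentiableAt ℝ ρ s)
    (hρdiff2 : ∀ s ∈ Ioo a b, DifferentiableAt ℝ (deriv ρ) s)
    (hρ' : ∀ s ∈ Ioo a b, 0 ≤ deriv ρ s)
    (hR : ∀ s ∈ Ioo a b,
      0 ≤ ((n:ℝ) - 1) / (ρ s)^2
            * (((n:ℝ) - 2) * (1 - (deriv ρ s)^2) - 2 * ρ s * deriv (deriv ρ) s)) :
    MonotoneOn (fun s => (1/2) * ρ s ^ (n-2) * (1 - (deriv ρ s)^2)) (Ioo a b) := by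
  obtain ⟨k, rfl⟩ : ∃ k, n = k + 3 := ⟨n - 3, by omega⟩
  have hk : ((k + 3 : ℕ) : ℝ) - 2 = k + 1 := by push_cast; ring
  -- the exponent `k + 3 - 2` of the statement reduces to `k + 1` definitionally
  refine monotoneOn_of_hasDerivAt_nonneg isOpen_Ioo (convex_Ioo a b)
    (fun s hs => hasDerivAt_hawkingMass k (hρdiff s hs).hasDerivAt (hρdiff2 s hs).hasDerivAt)
    (fun s hs => ?_)
  have hρs := hρpos s hs
  have hcoef : 0 < ((k + 3 : ℕ) - 1 : ℝ) / ρ s ^ 2 := by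
    push_cast; exact div_pos (by linarith [k.cast_nonneg (α := ℝ)]) (by positivity)
  have hbracket := (mul_nonneg_iff_of_pos_left hcoef).mp (hR s hs)
  rw [hk] at hbracket
  exact mul_nonneg (mul_nonneg one_half_pos.le (mul_nonneg (pow_nonneg hρs.le k) (hρ' s hs)))
    hbracket
end

section
/- Let $n \ge 3$ and let $\rho : [0,\infty) \to (0,\infty)$ be twice continuously differentiable with $\rho'(0) = 0$ (so that the inner boundary sphere is an apparent horizon/minimal surface). Define $m(s) = \tfrac{1}{2}\rho(s)^{n-2}(1-\rho'(s)^2)$ and $R(s) = (n-1)\rho(s)^{-2}[(n-2)(1-\rho'(s)^2) - 2\rho(s)\rho''(s)]$. Assume $\rho'(s) \ge 0$ and $R(s) \ge 0$ for all $s \ge 0$, and that $m(s)$ converges to a limit $m_\infty$ as $s \to \infty$. Then $m_\infty \ge \tfrac{1}{2}\rho(0)^{n-2} = \tfrac{1}{2}\left(\mathcal{A}_0/\omega_{n-1}\right)^{\frac{n-2}{n-1}}$, where $\mathcal{A}_0 = \omega_{n-1}\rho(0)^{n-1}$ is the area of the horizon and $\omega_{n-1}$ is the volume of the unit sphere $S^{n-1}$.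 -/
open Set Filter

/-!
The Hawking mass `m = ½ ρ^(n-2) (1 - ρ'^2)` has derivative
`m' = ½ ρ^(n-3) ρ' [(n-2)(1 - ρ'^2) - 2 ρ ρ'']`, and the bracket is `ρ^2 R / (n-1) ≥ 0`.
So `ρ' ≥ 0` makes `m` nondecreasing, and its limit dominates `m(0) = ½ ρ(0)^(n-2)`,
the value on the minimal sphere `ρ'(0) = 0`.
-/

-- `k` stands for `n - 2`.
noncomputable def hawkingMass (k : ℕ) (ρ ρ' : ℝ → ℝ) (s : ℝ) : ℝ :=
  1 / 2 * ρ s ^ k * (1 - ρ' s ^ 2)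

lemma hawkingMass_of_deriv_eq_zero {k : ℕ} {ρ ρ' : ℝ → ℝ} {s : ℝ} (hs : ρ' s = 0) :
    hawkingMass k ρ ρ' s = 1 / 2 * ρ s ^ k := by
  simp [hawkingMass, hs]

lemma hasDerivAt_hawkingMass_s3 {k : ℕ} (hk : 1 ≤ k) {ρ ρ' : ℝ → ℝ} {s d2 : ℝ}
    (hρ : HasDerivAt ρ (ρ' s) s) (hρ' : HasDerivAt ρ' d2 s) :
    HasDerivAt (hawkingMass k ρ ρ')
      (1 / 2 * ρ s ^ (k - 1) * ρ' s * (k * (1 - ρ' s ^ 2) - 2 * ρ s * d2)) s := by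
  have hpow : HasDerivAt (fun t => ρ t ^ k) (k * ρ s ^ (k - 1) * ρ' s) s := hρ.pow k
  have hsq : HasDerivAt (fun t => 1 - ρ' t ^ 2) (-(2 * ρ' s * d2)) s := by
    simpa using (hρ'.pow 2).const_sub 1
  have hmass : hawkingMass k ρ ρ' = fun t => 1 / 2 * (ρ t ^ k * (1 - ρ' t ^ 2)) := by
    funext t; simp only [hawkingMass]; ring
  rw [hmass]
  refine ((hpow.mul hsq).const_mul (1 / 2 : ℝ)).congr_deriv ?_
  obtain ⟨j, rfl⟩ := Nat.exists_eq_add_of_le' hk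
  simp only [Nat.add_sub_cancel, pow_succ]
  ring

lemma monotoneOn_hawkingMass {k : ℕ} (hk : 1 ≤ k) {ρ ρ' ρ'' : ℝ → ℝ} {a : ℝ}
    (hρpos : ∀ s, a ≤ s → 0 < ρ s)
    (hd1 : ∀ s, a ≤ s → HasDerivAt ρ (ρ' s) s)
    (hd2 : ∀ s, a ≤ s → HasDerivAt ρ' (ρ'' s) s)
    (hρ'nonneg : ∀ s, a ≤ s → 0 ≤ ρ' s)
    (hbracket : ∀ s, a ≤ s → 0 ≤ k * (1 - ρ' s ^ 2) - 2 * ρ s * ρ'' s) :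
    MonotoneOn (hawkingMass k ρ ρ') (Ici a) := by
  have hderiv s (hs : a ≤ s) := hasDerivAt_hawkingMass_s3 hk (hd1 s hs) (hd2 s hs)
  refine monotoneOn_of_hasDerivWithinAt_nonneg (convex_Ici a)
    (fun s hs => (hderiv s hs).continuousAt.continuousWithinAt)
    (fun s hs => (hderiv s (interior_subset hs)).hasDerivWithinAt) fun s hs => ?_
  have hs : a ≤ s := interior_subset hs
  have := hρpos s hs
  have := hρ'nonneg s hs
  have := hbracket s hs
  positivity

lemma le_of_monotoneOn_Ici_of_tendsto {f : ℝ → ℝ} {a l : ℝ} (hf : MonotoneOn f (Ici a))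
    (hl : Tendsto f atTop (nhds l)) : f a ≤ l :=
  ge_of_tendsto hl <| (eventually_ge_atTop a).mono fun _ hs => hf self_mem_Ici hs hs

lemma pow_rpow_div_natCast {r : ℝ} (hr : 0 ≤ r) {a : ℕ} (ha : a ≠ 0) (b : ℕ) :
    (r ^ a) ^ ((b : ℝ) / a) = r ^ b := by
  rw [← Real.rpow_natCast_mul hr, mul_div_cancel₀ _ (Nat.cast_ne_zero.mpr ha),
    Real.rpow_natCast]

theorem penrose_inequality_1d_general
    (n : ℕ) (hn : 3 ≤ n) (ω : ℝ) (hω : 0 < ω) (ρ ρ' ρ'' : ℝ → ℝ)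
    (hρpos : ∀ s, 0 ≤ s → 0 < ρ s)
    (hd1 : ∀ s, 0 ≤ s → HasDerivAt ρ (ρ' s) s)
    (hd2 : ∀ s, 0 ≤ s → HasDerivAt ρ' (ρ'' s) s)
    (hhorizon : ρ' 0 = 0)
    (hρ'nonneg : ∀ s, 0 ≤ s → 0 ≤ ρ' s)
    (hR : ∀ s, 0 ≤ s →
      0 ≤ ((n:ℝ) - 1) / (ρ s)^2
            * (((n:ℝ) - 2) * (1 - (ρ' s)^2) - 2 * ρ s * ρ'' s))
    (mInf : ℝ)
    (hlim : Tendsto (fun s => (1/2) * ρ s ^ (n-2) * (1 - (ρ' s)^2)) atTop (nhds mInf)) :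
    (1/2) * ρ 0 ^ (n-2) ≤ mInf ∧
    (1/2) * ρ 0 ^ (n-2)
      = (1/2) * ((ω * ρ 0 ^ (n-1)) / ω) ^ (((n:ℝ) - 2) / ((n:ℝ) - 1)) := by
  have hn3 : (3 : ℝ) ≤ n := by exact_mod_cast hn
  have hcast2 : ((n - 2 : ℕ) : ℝ) = n - 2 := by rw [Nat.cast_sub (by omega)]; norm_num
  have hcast1 : ((n - 1 : ℕ) : ℝ) = n - 1 := by rw [Nat.cast_sub (by omega)]; norm_num
  have hbracket s (hs : 0 ≤ s) :
      0 ≤ ((n - 2 : ℕ) : ℝ) * (1 - ρ' s ^ 2) - 2 * ρ s * ρ'' s := by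
    have hcoef : 0 < ((n : ℝ) - 1) / ρ s ^ 2 := by
      have := hρpos s hs
      apply div_pos <;> [linarith; positivity]
    rw [hcast2]
    exact nonneg_of_mul_nonneg_right (hR s hs) hcoef
  have hmono := monotoneOn_hawkingMass (by omega) hρpos hd1 hd2 hρ'nonneg hbracket
  refine ⟨?_, ?_⟩
  · rw [← hawkingMass_of_deriv_eq_zero hhorizon]
    exact le_of_monotoneOn_Ici_of_tendsto hmono hlim
  · rw [mul_div_cancel_left₀ _ hω.ne', ← hcast2, ← hcast1,
      pow_rpow_div_natCast (hρpos 0 le_rfl).le (by omega)]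

/-- One-dimensional Penrose inequality in spherical symmetry: if the inner boundary
is a horizon (`ρ'(0) = 0`), the area radius is nondecreasing, the scalar curvature
is nonnegative, and the Hawking mass converges to `mInf` at infinity, then
`mInf ≥ ½ ρ(0)^(n-2)`, which equals `½ (A₀/ω)^((n-2)/(n-1))` where
`A₀ = ω ρ(0)^(n-1)` is the horizon area and `ω` is the volume of the unit sphere. -/
theorem penrose_inequality_1d
    (n : ℕ) (hn : 3 ≤ n) (ω : ℝ) (hω : 0 < ω) (ρ ρ' ρ'' : ℝ → ℝ)
    (hρpos : ∀ s, 0 ≤ s → 0 < ρ s)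
    (hd1 : ∀ s, 0 ≤ s → HasDerivAt ρ (ρ' s) s)
    (hd2 : ∀ s, 0 ≤ s → HasDerivAt ρ' (ρ'' s) s)
    (hcont : ContinuousOn ρ'' (Ici 0))
    (hhorizon : ρ' 0 = 0)
    (hρ'nonneg : ∀ s, 0 ≤ s → 0 ≤ ρ' s)
    (hR : ∀ s, 0 ≤ s →
      0 ≤ ((n:ℝ) - 1) / (ρ s)^2
            * (((n:ℝ) - 2) * (1 - (ρ' s)^2) - 2 * ρ s * ρ'' s))
    (mInf : ℝ)
    (hlim : Tendsto (fun s => (1/2) * ρ s ^ (n-2) * (1 - (ρ' s)^2)) atTop (nhds mInf)) :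
    (1/2) * ρ 0 ^ (n-2) ≤ mInf ∧
    (1/2) * ρ 0 ^ (n-2)
      = (1/2) * ((ω * ρ 0 ^ (n-1)) / ω) ^ (((n:ℝ) - 2) / ((n:ℝ) - 1)) :=
  penrose_inequality_1d_general n hn ω hω ρ ρ' ρ'' hρpos hd1 hd2 hhorizon hρ'nonneg hR mInf hlim
end

section
/- Let $n \ge 3$, $s_0 > 0$, and constants $c_1, c_2, C > 0$. Let $r : [s_0,\infty) \to (0,\infty)$ be continuously differentiable with $c_1 s \le r(s) \le c_2 s$ for all $s \ge s_0$, and let $k_t : [s_0,\infty) \to \mathbb{R}$ be continuously differentiable and satisfy the linear ODE $k_t'(s) + \frac{2(n-1)\,r'(s)}{r(s)}\,k_t(s) = \mathcal{K}(s)$ where $|\mathcal{K}(s)| \le C s^{-n-1}$ for all $s \ge s_0$. Then there exists a constant $C' > 0$ (depending on $n, s_0, c_1, c_2, C$ and $|k_t(s_0)|$) such that $|k_t(s)| \le C' s^{-n}$ for all $s \ge s_0$. -/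
open Set Filter

/-!
The integrating factor `r ^ (2(n-1))` turns the ODE into `(r ^ (2(n-1)) kₜ)' = r ^ (2(n-1)) 𝒦`,
whose right-hand side is `O(s ^ (n-3))` because `r ≤ c₂ s`. Integrating from `s₀` gives
`r ^ (2(n-1)) kₜ = O(s ^ (n-2))` (for `n = 2` a logarithm would appear instead), and dividing by
`r ^ (2(n-1)) ≥ (c₁ s) ^ (2(n-1))` leaves `kₜ = O(s ^ (-n))`.
-/

theorem hasDerivAt_pow_mul_of_ne_zero {r k : ℝ → ℝ} {r' k' s : ℝ} (m : ℕ)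
    (hr : HasDerivAt r r' s) (hk : HasDerivAt k k' s) (hrs : r s ≠ 0) :
    HasDerivAt (fun x => r x ^ m * k x) (r s ^ m * (k' + m * r' / r s * k s)) s := by
  refine ((hr.fun_pow m).mul hk).congr_deriv ?_
  rcases m with _ | m
  · simp
  · rw [Nat.add_sub_cancel, pow_succ]
    field_simp
    push_cast
    ring

theorem abs_le_mul_pow_succ_of_abs_deriv_le {f f' : ℝ → ℝ} {a A x : ℝ} (k : ℕ)
    (ha : 0 < a)
    (hf : ∀ y, a ≤ y → HasDerivAt f (f' y) y) (hf' : ∀ y, a ≤ y → |f' y| ≤ A * y ^ k)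
    (hx : a ≤ x) :
    |f x| ≤ (|f a| / a ^ (k + 1) + A / (k + 1)) * x ^ (k + 1) := by
  have hA : 0 ≤ A :=
    nonneg_of_mul_nonneg_left ((abs_nonneg _).trans (hf' a le_rfl)) (pow_pos ha k)
  set D := |f a| / a ^ (k + 1) + A / (k + 1)
  have hDA : A ≤ D * (k + 1) := by
    have : D * (k + 1) = |f a| / a ^ (k + 1) * (k + 1) + A := by
      simp only [D]; field_simp
    rw [this]
    have : 0 ≤ |f a| / a ^ (k + 1) * (k + 1) := by positivity
    linarith
  have hDa : |f a| ≤ D * a ^ (k + 1) := by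
    have : D * a ^ (k + 1) = |f a| + A / (k + 1) * a ^ (k + 1) := by
      simp only [D]; field_simp
    rw [this]
    have : 0 ≤ A / (k + 1) * a ^ (k + 1) := by positivity
    linarith
  refine image_norm_le_of_norm_deriv_right_le_deriv_boundary (f := f) (b := x)
    (fun y hy => (hf y hy.1).continuousAt.continuousWithinAt)
    (fun y hy => (hf y hy.1).hasDerivWithinAt) hDa
    (fun y => (hasDerivAt_pow (k + 1) y).const_mul D) (fun y hy => ?_) ⟨hx, le_rfl⟩
  have hyk : 0 ≤ y ^ k := pow_nonneg (ha.le.trans hy.1) k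
  calc ‖f' y‖ ≤ A * y ^ k := hf' y hy.1
    _ ≤ D * (k + 1) * y ^ k := by gcongr
    _ = D * ((k + 1 : ℕ) * y ^ (k + 1 - 1)) := by push_cast; ring

theorem kt_decay_general
    (n : ℕ) (hn : 3 ≤ n) (s₀ c₁ c₂ C : ℝ)
    (hs₀ : 0 < s₀) (hc₁ : 0 < c₁) (hc₂ : 0 < c₂) (hC : 0 < C)
    (r r' kt kt' : ℝ → ℝ)
    (hrpos : ∀ s, s₀ ≤ s → 0 < r s)
    (hrbound : ∀ s, s₀ ≤ s → c₁ * s ≤ r s ∧ r s ≤ c₂ * s)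
    (hrd : ∀ s, s₀ ≤ s → HasDerivAt r (r' s) s)
    (hktd : ∀ s, s₀ ≤ s → HasDerivAt kt (kt' s) s)
    (hK : ∀ s, s₀ ≤ s →
      |kt' s + 2 * ((n:ℝ) - 1) * r' s / r s * kt s| ≤ C / s ^ (n+1)) :
    ∃ C' > 0, ∀ s, s₀ ≤ s → |kt s| ≤ C' / s ^ n := by
  obtain ⟨k, rfl⟩ : ∃ k, n = k + 3 := ⟨n - 3, by omega⟩
  set m := 2 * (k + 2)
  have hm : (m : ℝ) = 2 * (((k + 3 : ℕ) : ℝ) - 1) := by simp only [m]; push_cast; ring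
  set F := fun s => r s ^ m * kt s
  have hF : ∀ s, s₀ ≤ s → HasDerivAt F (r s ^ m * (kt' s + m * r' s / r s * kt s)) s :=
    fun s hs => hasDerivAt_pow_mul_of_ne_zero m (hrd s hs) (hktd s hs) (hrpos s hs).ne'
  have hF' : ∀ s, s₀ ≤ s →
      |r s ^ m * (kt' s + m * r' s / r s * kt s)| ≤ C * c₂ ^ m * s ^ k := by
    intro s hs
    have hs0 : 0 < s := hs₀.trans_le hs
    rw [abs_mul, abs_of_pos (pow_pos (hrpos s hs) m), hm]
    calc _ ≤ (c₂ * s) ^ m * (C / s ^ (k + 3 + 1)) :=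
          mul_le_mul (pow_le_pow_left₀ (hrpos s hs).le (hrbound s hs).2 m) (hK s hs)
            (abs_nonneg _) (by positivity)
      _ = C * c₂ ^ m * s ^ k := by field_simp; ring
  set D := |F s₀| / s₀ ^ (k + 1) + C * c₂ ^ m / (k + 1)
  refine ⟨D / c₁ ^ m, by positivity, fun s hs => ?_⟩
  have hs0 : 0 < s := hs₀.trans_le hs
  have hFs : |F s| ≤ D * s ^ (k + 1) := abs_le_mul_pow_succ_of_abs_deriv_le k hs₀ hF hF' hs
  have hrm : (c₁ * s) ^ m ≤ r s ^ m := pow_le_pow_left₀ (by positivity) (hrbound s hs).1 m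
  have hrm_pos : 0 < r s ^ m := pow_pos (hrpos s hs) m
  calc |kt s| = |r s ^ m * kt s| / r s ^ m := by
        rw [abs_mul, abs_of_pos hrm_pos, mul_div_cancel_left₀ _ hrm_pos.ne']
    _ ≤ D * s ^ (k + 1) / (c₁ * s) ^ m := div_le_div₀ (by positivity) hFs (by positivity) hrm
    _ = D / c₁ ^ m / s ^ (k + 3) := by field_simp; ring

/-- Decay estimate for the tangential second fundamental form: if `k_t` satisfies
the linear ODE `k_t' + 2(n-1) r'/r · k_t = 𝒦` with `|𝒦(s)| ≤ C s^{-n-1}` and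
`c₁ s ≤ r(s) ≤ c₂ s`, then `|k_t(s)| ≤ C' s^{-n}` for some constant `C'`. -/
theorem kt_decay
    (n : ℕ) (hn : 3 ≤ n) (s₀ c₁ c₂ C : ℝ)
    (hs₀ : 0 < s₀) (hc₁ : 0 < c₁) (hc₂ : 0 < c₂) (hC : 0 < C)
    (r r' kt kt' : ℝ → ℝ)
    (hrpos : ∀ s, s₀ ≤ s → 0 < r s)
    (hrbound : ∀ s, s₀ ≤ s → c₁ * s ≤ r s ∧ r s ≤ c₂ * s)
    (hrd : ∀ s, s₀ ≤ s → HasDerivAt r (r' s) s)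
    (hr'cont : ContinuousOn r' (Ici s₀))
    (hktd : ∀ s, s₀ ≤ s → HasDerivAt kt (kt' s) s)
    (hkt'cont : ContinuousOn kt' (Ici s₀))
    (hK : ∀ s, s₀ ≤ s →
      |kt' s + 2 * ((n:ℝ) - 1) * r' s / r s * kt s| ≤ C / s ^ (n+1)) :
    ∃ C' > 0, ∀ s, s₀ ≤ s → |kt s| ≤ C' / s ^ n :=
  kt_decay_general n hn s₀ c₁ c₂ C hs₀ hc₁ hc₂ hC r r' kt kt' hrpos hrbound hrd hktd hK
end

section
/- Let $n \ge 3$ and constants $\tilde c, c_5 > 0$, $\bar r \ge \tilde r_0 > 0$, $0 < m \le \min\{\bar r^{-2}, 1\}$. Let $u : [\tilde r_0, \infty) \to (0,\infty)$ be differentiable with (i) $\int_{\tilde r_0}^{\infty} r^{n-1}\left(\frac{d}{dr}\log u(r)\right)^2 dr \le \tilde c\, m$, and (ii) $|\log u(r)| \le c_5\, r^{-2(n-2)}$ for all $r \ge \bar r$. Then for every $r_1$ with $\tilde r_0 \le r_1 \le m^{-1/2}$ one has $|\log u(r_1)| \le c_5\, m^{\,n-2} + \sqrt{\tilde c\, m^{1/2}\,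 \tilde r_0^{\,1-n}}$; in particular there is a constant $C = C(n, \tilde c, c_5)$ with $|\log u(r_1)| \le C\, m^{1/4}\big(1 + \tilde r_0^{(1-n)/2}\big)$. -/
/-!
Between `r₁` and `r₂ = m^{-1/2}` the fundamental theorem of calculus and Cauchy–Schwarz give
`|log u(r₂) - log u(r₁)|² ≤ (r₂ - r₁) ∫ ((log u)')²
  ≤ r₂ r₀^{1-n} ∫ r^{n-1} ((log u)')² ≤ c̃ m^{1/2} r₀^{1-n}`,
since the weight `r^{n-1}` is at least `r₀^{n-1}`. The hypothesis `m ≤ r̄^{-2}` puts `r₂` in the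
asymptotic region, where `|log u(r₂)| ≤ c₅ r₂^{-2(n-2)} = c₅ m^{n-2}`.
-/

open Set Filter MeasureTheory

lemma integral_abs_le_sqrt_measureReal_mul_integral_sq {α : Type*} [MeasurableSpace α]
    {μ : Measure α} [IsFiniteMeasure μ] {v : α → ℝ} (hv : MemLp v 2 μ) :
    ∫ x, |v x| ∂μ ≤ √(μ.real univ * ∫ x, v x ^ 2 ∂μ) := by
  have h := integral_mul_le_Lp_mul_Lq_of_nonneg (μ := μ) Real.HolderConjugate.two_two
    (f := fun x => |v x|) (g := fun _ => (1 : ℝ)) (ae_of_all _ fun x => abs_nonneg (v x))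
    (ae_of_all _ fun _ => zero_le_one) (by rw [ENNReal.ofReal_ofNat]; exact hv.abs)
    (by simpa using memLp_const 1)
  simp only [mul_one, one_pow, Real.rpow_two, sq_abs, integral_const, smul_eq_mul] at h
  rwa [← Real.sqrt_eq_rpow, ← Real.sqrt_eq_rpow, ← Real.sqrt_mul' _ (by positivity),
    mul_comm] at h

lemma abs_sub_le_sqrt_mul_integral_sq {f v : ℝ → ℝ} {a b : ℝ} (hab : a ≤ b)
    (hf : ∀ x ∈ Icc a b, HasDerivAt f (v x) x)
    (hv : IntegrableOn (fun x => v x ^ 2) (Ioc a b)) :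
    |f b - f a| ≤ √((b - a) * ∫ x in Ioc a b, v x ^ 2) := by
  have hv_meas : AEStronglyMeasurable v (volume.restrict (Ioc a b)) :=
    (measurable_deriv f).aestronglyMeasurable.congr <|
      (ae_restrict_iff' measurableSet_Ioc).2 <| ae_of_all _ fun x hx =>
        (hf x (Ioc_subset_Icc_self hx)).deriv
  have hv_L2 : MemLp v 2 (volume.restrict (Ioc a b)) :=
    (memLp_two_iff_integrable_sq hv_meas).2 hv
  have hv_int : IntervalIntegrable v volume a b :=
    (intervalIntegrable_iff_integrableOn_Ioc_of_le hab).2 (hv_L2.integrable one_le_two)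
  rw [← intervalIntegral.integral_eq_sub_of_hasDerivAt (by rwa [uIcc_of_le hab]) hv_int,
    intervalIntegral.integral_of_le hab, ← Real.volume_real_Ioc_of_le hab]
  have : IsFiniteMeasure (volume.restrict (Ioc a b)) := by
    rw [isFiniteMeasure_restrict]; exact measure_Ioc_lt_top.ne
  calc |∫ x in Ioc a b, v x| ≤ ∫ x in Ioc a b, |v x| := abs_integral_le_integral_abs
    _ ≤ _ := by
      simpa using integral_abs_le_sqrt_measureReal_mul_integral_sq hv_L2

section Weighted

variable {v : ℝ → ℝ} {r₀ a b : ℝ} {k : ℕ}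

lemma integrableOn_Ioc_sq_of_integrableOn_pow_mul_sq (hr₀ : 0 < r₀) (ha : r₀ ≤ a)
    (hv : IntegrableOn (fun r => r ^ k * v r ^ 2) (Ici r₀)) :
    IntegrableOn (fun r => v r ^ 2) (Ioc a b) := by
  have hpos : ∀ r ∈ Icc a b, 0 < r := fun r hr => hr₀.trans_le (ha.trans hr.1)
  have hweight : ContinuousOn (fun r : ℝ => (r ^ k)⁻¹) (Icc a b) :=
    (continuousOn_pow k).inv₀ fun r hr => (pow_pos (hpos r hr) k).ne'
  refine IntegrableOn.mono_set ?_ Ioc_subset_Icc_self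
  refine ((hv.mono_set fun r hr => ha.trans hr.1).continuousOn_mul hweight
    isCompact_Icc).congr_fun (fun r hr => ?_) measurableSet_Icc
  field_simp [(pow_pos (hpos r hr) k).ne']

lemma setIntegral_Ioc_sq_le_of_pow_mul_sq (hr₀ : 0 < r₀) (ha : r₀ ≤ a)
    (hv : IntegrableOn (fun r => r ^ k * v r ^ 2) (Ici r₀)) :
    ∫ r in Ioc a b, v r ^ 2 ≤ (r₀ ^ k)⁻¹ * ∫ r in Ici r₀, r ^ k * v r ^ 2 := by
  have hsub : Ioc a b ⊆ Ici r₀ := fun r hr => ha.trans hr.1.le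
  have hr₀k : 0 < r₀ ^ k := pow_pos hr₀ k
  calc ∫ r in Ioc a b, v r ^ 2
    _ ≤ ∫ r in Ioc a b, (r₀ ^ k)⁻¹ * (r ^ k * v r ^ 2) := by
        refine setIntegral_mono_on (integrableOn_Ioc_sq_of_integrableOn_pow_mul_sq hr₀ ha hv)
          ((hv.mono_set hsub).const_mul _) measurableSet_Ioc fun r hr => ?_
        rw [le_inv_mul_iff₀ hr₀k]
        exact mul_le_mul_of_nonneg_right (pow_le_pow_left₀ hr₀.le (hsub hr) k) (sq_nonneg _)
    _ ≤ (r₀ ^ k)⁻¹ * ∫ r in Ici r₀, r ^ k * v r ^ 2 := by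
        rw [integral_const_mul]
        refine mul_le_mul_of_nonneg_left (setIntegral_mono_set hv ?_ hsub.eventuallyLE)
          (inv_nonneg.2 hr₀k.le)
        exact (ae_restrict_iff' measurableSet_Ici).2 <| ae_of_all _ fun r hr =>
          mul_nonneg (pow_nonneg (hr₀.le.trans hr) k) (sq_nonneg _)

end Weighted

lemma abs_le_add_sqrt_of_weighted_gradient_bound {n : ℕ} (hn : 1 ≤ n) {ct c₅ r₀ rb m : ℝ}
    {f v : ℝ → ℝ} (hr₀ : 0 < r₀) (hrb : r₀ ≤ rb) (hm : 0 < m) (hm_rb : m ≤ rb ^ (-2 : ℝ))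
    (hf : ∀ r, r₀ ≤ r → HasDerivAt f (v r) r)
    (hv : IntegrableOn (fun r => r ^ (n - 1) * v r ^ 2) (Ici r₀))
    (hv_bound : ∫ r in Ici r₀, r ^ (n - 1) * v r ^ 2 ≤ ct * m)
    (hf_far : ∀ r, rb ≤ r → |f r| ≤ c₅ * r ^ (-(2 * ((n : ℝ) - 2))))
    {r₁ : ℝ} (hr₁ : r₀ ≤ r₁) (hr₁m : r₁ ≤ m ^ (-(1 : ℝ) / 2)) :
    |f r₁| ≤ c₅ * m ^ ((n : ℝ) - 2) + √(ct * m ^ ((1 : ℝ) / 2) * r₀ ^ ((1 : ℝ) - n)) := by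
  set r₂ := m ^ (-(1 : ℝ) / 2) with hr₂
  have hr₂_pos : 0 < r₂ := Real.rpow_pos_of_pos hm _
  have hrb_r₂ : rb ≤ r₂ := by
    calc rb = (rb ^ (-2 : ℝ)) ^ (-(1 : ℝ) / 2) := by
          rw [← Real.rpow_mul (hr₀.trans_le hrb).le]; norm_num
      _ ≤ r₂ := Real.rpow_le_rpow_of_nonpos hm hm_rb (by norm_num)
  have h_far : |f r₂| ≤ c₅ * m ^ ((n : ℝ) - 2) := by
    have h := hf_far r₂ hrb_r₂
    rwa [hr₂, ← Real.rpow_mul hm.le,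
      show -(1 : ℝ) / 2 * -(2 * ((n : ℝ) - 2)) = n - 2 by ring] at h
  have h_holder : |f r₂ - f r₁| ≤ √((r₂ - r₁) * ∫ r in Ioc r₁ r₂, v r ^ 2) :=
    abs_sub_le_sqrt_mul_integral_sq hr₁m (fun r hr => hf r (hr₁.trans hr.1))
      (integrableOn_Ioc_sq_of_integrableOn_pow_mul_sq hr₀ hr₁ hv)
  have h_weight : r₀ ^ ((1 : ℝ) - n) = (r₀ ^ (n - 1))⁻¹ := by
    rw [← Real.rpow_natCast, ← Real.rpow_neg hr₀.le, Nat.cast_sub hn]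
    norm_num
  have h_energy : (r₂ - r₁) * ∫ r in Ioc r₁ r₂, v r ^ 2
      ≤ ct * m ^ ((1 : ℝ) / 2) * r₀ ^ ((1 : ℝ) - n) :=
    calc (r₂ - r₁) * ∫ r in Ioc r₁ r₂, v r ^ 2
      _ ≤ r₂ * ((r₀ ^ (n - 1))⁻¹ * (ct * m)) :=
          mul_le_mul (by linarith)
            ((setIntegral_Ioc_sq_le_of_pow_mul_sq hr₀ hr₁ hv).trans
              (mul_le_mul_of_nonneg_left hv_bound (by positivity)))
            (setIntegral_nonneg measurableSet_Ioc fun r _ => sq_nonneg (v r)) hr₂_pos.le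
      _ = ct * (m ^ (-(1 : ℝ) / 2) * m ^ (1 : ℝ)) * r₀ ^ ((1 : ℝ) - n) := by
          rw [h_weight, Real.rpow_one]; ring
      _ = ct * m ^ ((1 : ℝ) / 2) * r₀ ^ ((1 : ℝ) - n) := by
          rw [← Real.rpow_add hm]; norm_num
  calc |f r₁| = |f r₂ - (f r₂ - f r₁)| := by ring_nf
    _ ≤ |f r₂| + |f r₂ - f r₁| := abs_sub _ _
    _ ≤ _ := add_le_add h_far (h_holder.trans (Real.sqrt_le_sqrt h_energy))

lemma add_sqrt_le_mul_rpow_quarter {n ct c₅ r₀ m : ℝ} (hn : 1 / 4 ≤ n - 2) (hc₅ : 0 ≤ c₅)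
    (hr₀ : 0 ≤ r₀) (hm : 0 < m) (hm1 : m ≤ 1) :
    c₅ * m ^ (n - 2) + √(ct * m ^ ((1 : ℝ) / 2) * r₀ ^ (1 - n))
      ≤ (c₅ + √ct) * m ^ ((1 : ℝ) / 4) * (1 + r₀ ^ ((1 - n) / 2)) := by
  have h_pow : m ^ (n - 2) ≤ m ^ ((1 : ℝ) / 4) := Real.rpow_le_rpow_of_exponent_ge hm hm1 hn
  have h_sqrt_rpow : ∀ {x : ℝ} (y : ℝ), 0 ≤ x → √(x ^ y) = x ^ (y / 2) := fun y hx => by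
    rw [Real.sqrt_eq_rpow, ← Real.rpow_mul hx]; ring_nf
  have h_sqrt : √(ct * m ^ ((1 : ℝ) / 2) * r₀ ^ (1 - n))
      = √ct * m ^ ((1 : ℝ) / 4) * r₀ ^ ((1 - n) / 2) := by
    rw [mul_assoc, Real.sqrt_mul' _ (by positivity), Real.sqrt_mul (by positivity),
      h_sqrt_rpow _ hm.le, h_sqrt_rpow _ hr₀, mul_assoc]
    norm_num
  have hm_pos : 0 ≤ m ^ ((1 : ℝ) / 4) := by positivity
  have hr₀_pos : 0 ≤ r₀ ^ ((1 - n) / 2) := by positivity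
  rw [h_sqrt]
  nlinarith [mul_le_mul_of_nonneg_left h_pow hc₅, mul_nonneg (mul_nonneg hc₅ hm_pos) hr₀_pos,
    mul_nonneg (Real.sqrt_nonneg ct) hm_pos]

theorem c0_control_log_conformal_factor_general
    (n : ℕ) (hn : 3 ≤ n) (ct c₅ : ℝ) (hc₅ : 0 < c₅) :
    (∀ (r₀ rb m : ℝ) (u v : ℝ → ℝ),
      0 < r₀ → r₀ ≤ rb → 0 < m → m ≤ min (rb ^ (-2 : ℝ)) 1 →
      (∀ r, r₀ ≤ r → 0 < u r) →
      (∀ r, r₀ ≤ r → HasDerivAt (fun x => Real.log (u x)) (v r) r) →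
      IntegrableOn (fun r => r ^ (n-1) * (v r)^2) (Set.Ici r₀) →
      (∫ r in Set.Ici r₀, r ^ (n-1) * (v r)^2) ≤ ct * m →
      (∀ r, rb ≤ r → |Real.log (u r)| ≤ c₅ * r ^ (-(2 * ((n:ℝ) - 2)))) →
      ∀ r₁, r₀ ≤ r₁ → r₁ ≤ m ^ (-(1:ℝ)/2) →
        |Real.log (u r₁)|
          ≤ c₅ * m ^ ((n:ℝ) - 2) + Real.sqrt (ct * m ^ ((1:ℝ)/2) * r₀ ^ ((1:ℝ) - n))) ∧
    (∃ C > 0, ∀ (r₀ rb m : ℝ) (u v : ℝ → ℝ),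
      0 < r₀ → r₀ ≤ rb → 0 < m → m ≤ min (rb ^ (-2 : ℝ)) 1 →
      (∀ r, r₀ ≤ r → 0 < u r) →
      (∀ r, r₀ ≤ r → HasDerivAt (fun x => Real.log (u x)) (v r) r) →
      IntegrableOn (fun r => r ^ (n-1) * (v r)^2) (Set.Ici r₀) →
      (∫ r in Set.Ici r₀, r ^ (n-1) * (v r)^2) ≤ ct * m →
      (∀ r, rb ≤ r → |Real.log (u r)| ≤ c₅ * r ^ (-(2 * ((n:ℝ) - 2)))) →
      ∀ r₁, r₀ ≤ r₁ → r₁ ≤ m ^ (-(1:ℝ)/2) →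
        |Real.log (u r₁)| ≤ C * m ^ ((1:ℝ)/4) * (1 + r₀ ^ (((1:ℝ) - n)/2))) := by
  have hn' : (1 : ℝ) / 4 ≤ n - 2 := by
    have : (3 : ℝ) ≤ n := by exact_mod_cast hn
    linarith
  refine ⟨fun r₀ rb m u v hr₀ hrb hm hm_min _ hf hv hv_bound hf_far r₁ hr₁ hr₁m =>
      abs_le_add_sqrt_of_weighted_gradient_bound (by omega) hr₀ hrb hm
        (hm_min.trans (min_le_left _ _)) hf hv hv_bound hf_far hr₁ hr₁m,
    c₅ + √ct, by positivity,
    fun r₀ rb m u v hr₀ hrb hm hm_min _ hf hv hv_bound hf_far r₁ hr₁ hr₁m => ?_⟩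
  exact (abs_le_add_sqrt_of_weighted_gradient_bound (by omega) hr₀ hrb hm
      (hm_min.trans (min_le_left _ _)) hf hv hv_bound hf_far hr₁ hr₁m).trans
    (add_sqrt_le_mul_rpow_quarter hn' hc₅.le hr₀.le hm (hm_min.trans (min_le_right _ _)))

/-- Uniform `C⁰` smallness of the log of the conformal factor away from the center:
combining (i) the weighted radial `L²` gradient bound `∫ r^{n-1}((log u)')² ≤ c̃ m`
with (ii) the asymptotic bound `|log u(r)| ≤ c₅ r^{-2(n-2)}` for `r ≥ r̄`, one gets
for `r₀ ≤ r₁ ≤ m^{-1/2}` that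
`|log u(r₁)| ≤ c₅ m^{n-2} + √(c̃ m^{1/2} r₀^{1-n})`; in particular there is a
constant `C = C(n, c̃, c₅)` with `|log u(r₁)| ≤ C m^{1/4} (1 + r₀^{(1-n)/2})`. -/
theorem c0_control_log_conformal_factor
    (n : ℕ) (hn : 3 ≤ n) (ct c₅ : ℝ) (hct : 0 < ct) (hc₅ : 0 < c₅) :
    (∀ (r₀ rb m : ℝ) (u v : ℝ → ℝ),
      0 < r₀ → r₀ ≤ rb → 0 < m → m ≤ min (rb ^ (-2 : ℝ)) 1 →
      (∀ r, r₀ ≤ r → 0 < u r) →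
      (∀ r, r₀ ≤ r → HasDerivAt (fun x => Real.log (u x)) (v r) r) →
      IntegrableOn (fun r => r ^ (n-1) * (v r)^2) (Set.Ici r₀) →
      (∫ r in Set.Ici r₀, r ^ (n-1) * (v r)^2) ≤ ct * m →
      (∀ r, rb ≤ r → |Real.log (u r)| ≤ c₅ * r ^ (-(2 * ((n:ℝ) - 2)))) →
      ∀ r₁, r₀ ≤ r₁ → r₁ ≤ m ^ (-(1:ℝ)/2) →
        |Real.log (u r₁)|
          ≤ c₅ * m ^ ((n:ℝ) - 2) + Real.sqrt (ct * m ^ ((1:ℝ)/2) * r₀ ^ ((1:ℝ) - n))) ∧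
    (∃ C > 0, ∀ (r₀ rb m : ℝ) (u v : ℝ → ℝ),
      0 < r₀ → r₀ ≤ rb → 0 < m → m ≤ min (rb ^ (-2 : ℝ)) 1 →
      (∀ r, r₀ ≤ r → 0 < u r) →
      (∀ r, r₀ ≤ r → HasDerivAt (fun x => Real.log (u x)) (v r) r) →
      IntegrableOn (fun r => r ^ (n-1) * (v r)^2) (Set.Ici r₀) →
      (∫ r in Set.Ici r₀, r ^ (n-1) * (v r)^2) ≤ ct * m →
      (∀ r, rb ≤ r → |Real.log (u r)| ≤ c₅ * r ^ (-(2 * ((n:ℝ) - 2)))) →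
      ∀ r₁, r₀ ≤ r₁ → r₁ ≤ m ^ (-(1:ℝ)/2) →
        |Real.log (u r₁)| ≤ C * m ^ ((1:ℝ)/4) * (1 + r₀ ^ (((1:ℝ) - n)/2))) :=
  c0_control_log_conformal_factor_general n hn ct c₅ hc₅
end
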